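/- Suppose q is odd. Then: (1) b₀ = b; (2) for every 1 ≤ ℓ ≤ t−1, b_ℓ = (1 − a_ℓ·b)·(a − b − a_ℓ)⁻¹; (3) b_{t−1} = (a − b)⁻¹; (4) for every 2 ≤ ℓ ≤ t−2, (b_ℓ·b_{ℓ+1})·(a_ℓ·a_{ℓ−1})⁻¹ = (a_{ℓ+1}·b − 1)·(a_{ℓ−1}·b − 1)⁻¹. -/

import Mathlib

open Polynomial

noncomputable section

abbrev SL2 (F : Type*) [Field F] := Matrix.SpecialLinearGroup (Fin 2) F

abbrev PSL2 (F : Type*) [Field F] := SL2 F ⧸ Subgroup.center (SL2 F)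

/-- image in `PSL₂(F)` of the matrix `[[1, x], [0, 1]]`. -/
def uu {F : Type*} [Field F] (x : F) : PSL2 F :=
  QuotientGroup.mk ⟨!![1, x; 0, 1], by simp [Matrix.det_fin_two_of]⟩

/-- image in `PSL₂(F)` of the matrix `[[y, 0], [0, y⁻¹]]`. -/
def hh {F : Type*} [Field F] (y : F) (hy : y ≠ 0) : PSL2 F :=
  QuotientGroup.mk ⟨!![y, 0; 0, y⁻¹], by simp [Matrix.det_fin_two_of, mul_inv_cancel₀ hy]⟩

/-- image in `PSL₂(F)` of the matrix `[[0, 1], [-1, 0]]`. -/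
def ss {F : Type*} [Field F] : PSL2 F :=
  QuotientGroup.mk ⟨!![0, 1; -1, 0], by simp [Matrix.det_fin_two_of]⟩

/-- the sequence `a_k`: `a₁ = a`, `a_{k+1} = a - a_k⁻¹` (with junk value `a₀ = 0`). -/
def aSeq {F : Type*} [Field F] (a : F) : ℕ → F
  | 0 => 0
  | k + 1 => a - (aSeq a k)⁻¹

/-- the sequence `b_ℓ`: `b₀ = b`, `b_{ℓ+1} = a - b_ℓ⁻¹`. -/
def bSeq {F : Type*} [Field F] (a b : F) : ℕ → F
  | 0 => b
  | k + 1 => a - (bSeq a b k)⁻¹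

/-- `alph a n = α_{n-1}(a)`, the (index-shifted) Dickson polynomial of the second
kind values: `α_{-1} = 0`, `α₀ = 1`, `α_{n+1} = a·α_n - α_{n-1}`. -/
def alph {F : Type*} [Field F] (a : F) : ℕ → F
  | 0 => 0
  | 1 => 1
  | n + 2 => a * alph a (n + 1) - alph a n

/-- `bet a b n = β_{n-1}(a,b)`: `β_{-1} = 1`, `β_n = b·α_n - α_{n-1}` for `n ≥ 0`. -/
def bet {F : Type*} [Field F] (a b : F) : ℕ → F
  | 0 => 1
  | n + 1 => b * alph a (n + 1) - alph a n

/-- `gam a b n = γ_{n-1}(a,b)` where `γ_n = α_n + b·β_n`. -/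
def gam {F : Type*} [Field F] (a b : F) (n : ℕ) : F := alph a n + b * bet a b n


/-!
Over the algebraic closure `a = μ + μ⁻¹` with `μ = -ω`, and `(μ - μ⁻¹) * alph a n = μ ^ n - μ⁻¹ ^ n`,
so `alph a n = 0` exactly when `t = orderOf (μ ^ 2)` divides `n`. Below `t` the iterates of
`x ↦ a - x⁻¹` are ratios of consecutive terms of the recurrence `u (n + 2) = a * u (n + 1) - u n`:
`aSeq a k = alph a (k + 1) / alph a k` and `bSeq a b l = bet a b (l + 1) / bet a b l`. By the addition
formula for `alph` and `alph a t = 0`, a zero `bet a b (m + 1) = 0` would force `b = aSeq a (t - m - 1)`,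
so the hypothesis on `b` keeps every denominator nonzero and the four claims reduce to identities
between these ratios.
-/

section Recurrence

variable {F : Type*} [Field F]

theorem alph_add_two (a : F) (n : ℕ) : alph a (n + 2) = a * alph a (n + 1) - alph a n := rfl

theorem bet_add_two (a b : F) (n : ℕ) : bet a b (n + 2) = a * bet a b (n + 1) - bet a b n := by
  cases n with
  | zero => simp only [bet, alph]; ring
  | succ n => simp only [bet, alph]; ring

theorem alph_add (a : F) (m n : ℕ) :
    alph a (m + n + 1) = alph a (m + 1) * alph a (n + 1) - alph a m * alph a n := by
  induction m using Nat.twoStepInduction with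
  | zero => simp [alph]
  | one => rw [show 1 + n + 1 = n + 2 by ring, alph_add_two]; simp [alph]
  | more m ih₀ ih₁ =>
    rw [show m + 2 + n + 1 = m + n + 1 + 2 by ring, alph_add_two a (m + n + 1),
      show m + n + 1 + 1 = m + 1 + n + 1 by ring, ih₁, ih₀, alph_add_two a (m + 1),
      alph_add_two a m]
    ring

theorem eq_div_of_sub_inv_recurrence {a : F} {x u : ℕ → F}
    (hx : ∀ k, x (k + 1) = a - (x k)⁻¹) (hu : ∀ n, u (n + 2) = a * u (n + 1) - u n)
    (h₀ : x 0 = u 1 / u 0) {k : ℕ} (hne : ∀ j, 1 ≤ j → j ≤ k → u j ≠ 0) :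
    x k = u (k + 1) / u k := by
  induction k with
  | zero => exact h₀
  | succ k ih =>
    have hk : u (k + 1) ≠ 0 := hne _ le_add_self le_rfl
    rw [hx, ih fun j h₁ h₂ => hne j h₁ (h₂.trans k.le_succ), inv_div, hu]
    field_simp

theorem aSeq_eq_div {a : F} {k : ℕ} (hne : ∀ j, 1 ≤ j → j ≤ k → alph a j ≠ 0) :
    aSeq a k = alph a (k + 1) / alph a k :=
  -- at `k = 0` both sides are junk values: `aSeq a 0 = 0 = 1 / 0`
  eq_div_of_sub_inv_recurrence (fun _ => rfl) (alph_add_two a) (by simp [aSeq, alph]) hne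

theorem bSeq_eq_div {a b : F} {l : ℕ} (hne : ∀ j, 1 ≤ j → j ≤ l → bet a b j ≠ 0) :
    bSeq a b l = bet a b (l + 1) / bet a b l :=
  eq_div_of_sub_inv_recurrence (fun _ => rfl) (bet_add_two a b) (by simp [bSeq, bet, alph]) hne

end Recurrence

section Extension

variable {F K : Type*} [Field F] [Field K]

theorem map_alph (f : F →+* K) (a : F) (n : ℕ) : f (alph a n) = alph (f a) n := by
  induction n using Nat.twoStepInduction with
  | zero => simp [alph]
  | one => simp [alph]
  | more n ih₀ ih₁ => rw [alph_add_two, alph_add_two, map_sub, map_mul, ih₀, ih₁]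

theorem sub_mul_alph {μ σ : K} (h : μ * σ = 1) (n : ℕ) :
    (μ - σ) * alph (μ + σ) n = μ ^ n - σ ^ n := by
  induction n using Nat.twoStepInduction with
  | zero => simp [alph]
  | one => simp [alph]
  | more n ih₀ ih₁ =>
    rw [alph_add_two]
    linear_combination (μ + σ) * ih₁ - ih₀ + (μ ^ n - σ ^ n) * h

theorem alph_eq_zero_iff (f : F →+* K) {a : F} {μ : K} (hμ₀ : μ ≠ 0) (hμ : μ ^ 2 ≠ 1)
    (ha : f a = μ + μ⁻¹) (n : ℕ) : alph a n = 0 ↔ μ ^ (2 * n) = 1 := by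
  have hsub : μ - μ⁻¹ ≠ 0 := by
    intro h
    apply hμ
    field_simp at h
    linear_combination h
  rw [← map_eq_zero_iff f f.injective, map_alph, ha,
    ← mul_eq_zero_iff_left hsub, sub_mul_alph (mul_inv_cancel₀ hμ₀), sub_eq_zero,
    pow_mul', sq, inv_pow, mul_eq_one_iff_eq_inv₀ (pow_ne_zero n hμ₀)]

theorem isLeast_alph_eq_zero (f : F →+* K) {a : F} {μ : K} (hμ₀ : μ ≠ 0)
    (ha : f a = μ + μ⁻¹) (hμ : 1 < orderOf (μ ^ 2)) :
    IsLeast {n | 0 < n ∧ alph a n = 0} (orderOf (μ ^ 2)) := by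
  have hμ₁ : μ ^ 2 ≠ 1 := fun h => by simp [h] at hμ
  have hzero_iff (n : ℕ) : alph a n = 0 ↔ orderOf (μ ^ 2) ∣ n := by
    rw [alph_eq_zero_iff f hμ₀ hμ₁ ha, pow_mul, orderOf_dvd_iff_pow_eq_one]
  exact ⟨⟨by omega, (hzero_iff _).2 dvd_rfl⟩, fun n ⟨hn, hz⟩ => Nat.le_of_dvd hn ((hzero_iff n).1 hz)⟩

end Extension

section RankOfApparition

variable {F : Type*} [Field F] {a b : F} {t : ℕ}

theorem one_lt_of_isLeast_alph_eq_zero (ht : IsLeast {n | 0 < n ∧ alph a n = 0} t) : 1 < t := by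
  obtain ⟨⟨ht₀, htz⟩, -⟩ := ht
  exact Nat.lt_of_le_of_ne ht₀ fun h => by subst h; simp [alph] at htz

theorem alph_ne_zero_of_lt (ht : IsLeast {n | 0 < n ∧ alph a n = 0} t) {n : ℕ}
    (h₁ : 1 ≤ n) (hn : n < t) : alph a n ≠ 0 :=
  fun h => (ht.2 ⟨h₁, h⟩).not_gt hn

theorem alph_mul_alph_of_add_eq (ht : IsLeast {n | 0 < n ∧ alph a n = 0} t) {m n : ℕ}
    (h : m + n + 1 = t) : alph a (m + 1) * alph a (n + 1) = alph a m * alph a n := by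
  rw [← sub_eq_zero, ← alph_add, h]
  exact ht.1.2

theorem aSeq_eq_div_of_lt (ht : IsLeast {n | 0 < n ∧ alph a n = 0} t) {k : ℕ} (hk : k < t) :
    aSeq a k = alph a (k + 1) / alph a k :=
  aSeq_eq_div fun _ h₁ h₂ => alph_ne_zero_of_lt ht h₁ (h₂.trans_lt hk)

theorem aSeq_pred_eq_zero (ht : IsLeast {n | 0 < n ∧ alph a n = 0} t) : aSeq a (t - 1) = 0 := by
  rw [aSeq_eq_div_of_lt ht (Nat.sub_lt ht.1.1 one_pos), Nat.sub_one_add_one ht.1.1.ne', ht.1.2,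
    zero_div]

theorem aSeq_mul_sub_one (ht : IsLeast {n | 0 < n ∧ alph a n = 0} t) {n : ℕ} (h₁ : 1 ≤ n)
    (hn : n < t) : aSeq a n * b - 1 = bet a b (n + 1) / alph a n := by
  have hA := alph_ne_zero_of_lt ht h₁ hn
  rw [aSeq_eq_div_of_lt ht hn, bet]
  field_simp

theorem bet_ne_zero (ht : IsLeast {n | 0 < n ∧ alph a n = 0} t)
    (hb : ∀ k : ℕ, 1 ≤ k → k ≤ t - 1 → b ≠ aSeq a k) {l : ℕ} (hl : l < t) : bet a b l ≠ 0 := by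
  obtain _ | m := l
  · simp [bet]
  intro h
  obtain ⟨n, rfl⟩ : ∃ n, t = m + n + 2 := ⟨t - m - 2, by omega⟩
  have hAm := alph_ne_zero_of_lt ht (by omega) hl
  have hAn := alph_ne_zero_of_lt ht (by omega) (by omega : n + 1 < m + n + 2)
  have hadd := alph_mul_alph_of_add_eq ht (show m + (n + 1) + 1 = m + n + 2 by ring)
  refine hb (n + 1) (by omega) (by omega) ?_
  rw [aSeq_eq_div_of_lt ht (by omega), eq_div_iff hAn]
  rw [bet] at h
  apply mul_left_cancel₀ hAm
  linear_combination alph a (n + 1) * h - hadd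

theorem bSeq_eq_div_of_lt (ht : IsLeast {n | 0 < n ∧ alph a n = 0} t)
    (hb : ∀ k : ℕ, 1 ≤ k → k ≤ t - 1 → b ≠ aSeq a k) {l : ℕ} (hl : l < t) :
    bSeq a b l = bet a b (l + 1) / bet a b l :=
  bSeq_eq_div fun _ _ hj => bet_ne_zero ht hb (hj.trans_lt hl)

theorem bSeq_eq_of_lt (ht : IsLeast {n | 0 < n ∧ alph a n = 0} t)
    (hb : ∀ k : ℕ, 1 ≤ k → k ≤ t - 1 → b ≠ aSeq a k) {l : ℕ} (h₁ : 1 ≤ l) (hl : l < t) :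
    bSeq a b l = (1 - aSeq a l * b) * (a - b - aSeq a l)⁻¹ := by
  obtain ⟨m, rfl⟩ : ∃ m, l = m + 1 := ⟨l - 1, by omega⟩
  have hA := alph_ne_zero_of_lt ht h₁ hl
  have hB := bet_ne_zero ht hb hl
  rw [bet] at hB
  rw [bSeq_eq_div_of_lt ht hb hl, aSeq_eq_div_of_lt ht hl, bet, bet, alph_add_two]
  have hden : a - b - (a * alph a (m + 1) - alph a m) / alph a (m + 1) =
      -(b * alph a (m + 1) - alph a m) / alph a (m + 1) := by
    field_simp
    ring
  rw [hden]
  field_simp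
  ring

theorem bSeq_pred_eq (ht : IsLeast {n | 0 < n ∧ alph a n = 0} t)
    (hb : ∀ k : ℕ, 1 ≤ k → k ≤ t - 1 → b ≠ aSeq a k) : bSeq a b (t - 1) = (a - b)⁻¹ := by
  have := one_lt_of_isLeast_alph_eq_zero ht
  rw [bSeq_eq_of_lt ht hb (by omega) (by omega), aSeq_pred_eq_zero ht, zero_mul, sub_zero,
    sub_zero, one_mul]

theorem bSeq_mul_bSeq_succ_mul_inv (ht : IsLeast {n | 0 < n ∧ alph a n = 0} t)
    (hb : ∀ k : ℕ, 1 ≤ k → k ≤ t - 1 → b ≠ aSeq a k) {l : ℕ} (h₂ : 2 ≤ l) (hl : l + 1 < t) :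
    (bSeq a b l * bSeq a b (l + 1)) * (aSeq a l * aSeq a (l - 1))⁻¹ =
      (aSeq a (l + 1) * b - 1) * (aSeq a (l - 1) * b - 1)⁻¹ := by
  obtain ⟨m, rfl⟩ : ∃ m, l = m + 2 := ⟨l - 2, by omega⟩
  have hA₁ := alph_ne_zero_of_lt ht (by omega) (by omega : m + 1 < t)
  have hA₂ := alph_ne_zero_of_lt ht (by omega : 1 ≤ m + 2) (by omega : m + 2 < t)
  have hA₃ := alph_ne_zero_of_lt ht (by omega : 1 ≤ m + 3) hl
  have hB₂ := bet_ne_zero ht hb (by omega : m + 2 < t)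
  have hB₃ := bet_ne_zero ht hb hl
  rw [show m + 2 - 1 = m + 1 by omega, bSeq_eq_div_of_lt ht hb (by omega),
    bSeq_eq_div_of_lt ht hb hl, aSeq_mul_sub_one ht (by omega) hl,
    aSeq_mul_sub_one ht (by omega) (by omega), aSeq_eq_div_of_lt ht (by omega),
    aSeq_eq_div_of_lt ht (by omega)]
  field_simp

end RankOfApparition

theorem stmt14_general (F : Type*) [Field F] [Fintype F] (q : ℕ) (hq : Fintype.card F = q)
    (a : F)
    (ω : AlgebraicClosure F) (hroot : aeval ω (X ^ 2 + C a * X + 1 : F[X]) = 0)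
    (hord : orderOf ω = q + 1)
    (hqodd : Odd q) (t : ℕ) (ht : t = (q + 1) / Nat.gcd 2 (q + 1)) (b : F)
    (hb : ∀ k : ℕ, 1 ≤ k → k ≤ t - 1 → b ≠ aSeq a k) :
    bSeq a b 0 = b ∧
    (∀ l : ℕ, 1 ≤ l → l ≤ t - 1 →
      bSeq a b l = (1 - aSeq a l * b) * (a - b - aSeq a l)⁻¹) ∧
    bSeq a b (t - 1) = (a - b)⁻¹ ∧
    ∀ l : ℕ, 2 ≤ l → l ≤ t - 2 →
      (bSeq a b l * bSeq a b (l + 1)) * (aSeq a l * aSeq a (l - 1))⁻¹ =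
        (aSeq a (l + 1) * b - 1) * (aSeq a (l - 1) * b - 1)⁻¹ := by
  obtain ⟨m, rfl⟩ := hqodd
  have hm : 1 ≤ m := by have := Fintype.one_lt_card (α := F); omega
  have ht' : t = m + 1 := by rw [ht, Nat.gcd_eq_left ⟨m + 1, by ring⟩]; omega
  have hω₀ : ω ≠ 0 := by rintro rfl; simp at hroot
  have ha : algebraMap F _ a = -ω + (-ω)⁻¹ := by
    have hω : ω ^ 2 + algebraMap F _ a * ω + 1 = 0 := by simpa using hroot
    field_simp
    linear_combination hω
  have hord₂ : orderOf ((-ω) ^ 2) = t := by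
    rw [neg_sq, orderOf_pow' ω two_ne_zero, hord, Nat.gcd_eq_right ⟨m + 1, by ring⟩]
    omega
  have hrank : IsLeast {n | 0 < n ∧ alph a n = 0} t :=
    hord₂ ▸ isLeast_alph_eq_zero (algebraMap F _) (neg_ne_zero.2 hω₀) ha (by omega)
  exact ⟨rfl, fun l h₁ hl => bSeq_eq_of_lt hrank hb h₁ (by omega), bSeq_pred_eq hrank hb,
    fun l h₂ hl => bSeq_mul_bSeq_succ_mul_inv hrank hb h₂ (by omega)⟩

theorem stmt14 (F : Type*) [Field F] [Fintype F] (q : ℕ) (hq : Fintype.card F = q)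
    (a : F) (hirr : Irreducible (X ^ 2 + C a * X + 1 : F[X]))
    (ω : AlgebraicClosure F) (hroot : aeval ω (X ^ 2 + C a * X + 1 : F[X]) = 0)
    (hord : orderOf ω = q + 1)
    (hqodd : Odd q) (t : ℕ) (ht : t = (q + 1) / Nat.gcd 2 (q + 1)) (b : F)
    (hb : ∀ k : ℕ, 1 ≤ k → k ≤ t - 1 → b ≠ aSeq a k) :
    bSeq a b 0 = b ∧
    (∀ l : ℕ, 1 ≤ l → l ≤ t - 1 →
      bSeq a b l = (1 - aSeq a l * b) * (a - b - aSeq a l)⁻¹) ∧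
    bSeq a b (t - 1) = (a - b)⁻¹ ∧
    ∀ l : ℕ, 2 ≤ l → l ≤ t - 2 →
      (bSeq a b l * bSeq a b (l + 1)) * (aSeq a l * aSeq a (l - 1))⁻¹ =
        (aSeq a (l + 1) * b - 1) * (aSeq a (l - 1) * b - 1)⁻¹ :=
  stmt14_general F q hq a ω hroot hord hqodd t ht b hb

end
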